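/- Let C_{\mu} \subset C^3 be the cylinder curve with structure sheaf O_{C_\mu} = C[x1,x2,x3]/(\mu[x2,x3]\cdot C[x1,x2,x3]) for a nonempty partition \mu, and let m be the ideal of the origin in O_{C_\mu}. Then the direct limit over r of Hom(m^r, O_{C_\mu}) is isomorphic as a C[x1,x2,x3]-module to the localization (O_{C_\mu})_{x_1} = C[x1,x1^{-1}] \otimes C[x2,x3]/\mu[x2,x3]. -/

import Mathlib

/-!
STATEMENT 5: For the cylinder curve `C_μ ⊆ ℂ³` with `O_{C_μ} = ℂ[x₁,x₂,x₃]/(μ[x₂,x₃])`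
(μ a nonempty partition) and `m` the ideal of the origin, the direct limit over `r` of
`Hom(m^r, O_{C_μ})` is isomorphic, as a module, to the localization
`(O_{C_μ})_{x₁} = ℂ[x₁,x₁⁻¹] ⊗ ℂ[x₂,x₃]/μ[x₂,x₃]`.
-/

noncomputable section

set_option maxHeartbeats 1000000
set_option synthInstance.maxHeartbeats 400000

open MvPolynomial

abbrev R3 := MvPolynomial (Fin 3) ℂ

/-- The cylinder monomial ideal `μ[x₂,x₃] · ℂ[x₁,x₂,x₃]` (cylinder along the `x₁`-axis),
generated by the monomials `x₂^a x₃^b` with `(a,b)` outside the Young diagram `μ`. -/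
def cylIdeal (μ : YoungDiagram) : Ideal R3 :=
  Ideal.span {m : R3 | ∃ a b : ℕ, (a, b) ∉ μ ∧
    m = monomial (Finsupp.single 1 a + Finsupp.single 2 b) (1 : ℂ)}

/-- The affine coordinate ring `O_{C_μ}` of the cylinder curve. -/
abbrev OC (μ : YoungDiagram) : Type := R3 ⧸ cylIdeal μ

/-- The ideal `m ⊆ O_{C_μ}` of the origin. -/
def mOrigin (μ : YoungDiagram) : Ideal (OC μ) :=
  Ideal.span (Set.range fun i : Fin 3 => Ideal.Quotient.mk (cylIdeal μ) (X i))

/-- The directed system `r ↦ Hom(m^r, O_{C_μ})`, with transition maps given by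
restriction along `m^{r+1} ⊆ m^r`. -/
abbrev homSystem (μ : YoungDiagram) (r : ℕ) : Type :=
  (↥(mOrigin μ ^ r)) →ₗ[OC μ] OC μ

/-- Transition maps of the directed system: restriction along the inclusion
`m^s ⊆ m^r` for `r ≤ s`. -/
def homTransition (μ : YoungDiagram) (r s : ℕ) (h : r ≤ s) :
    homSystem μ r →ₗ[OC μ] homSystem μ s where
  toFun φ := φ.comp (Submodule.inclusion (Ideal.pow_le_pow_right h))
  map_add' := by intros; rfl
  map_smul' := by intros; rfl

namespace CylAux

variable (μ : YoungDiagram)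

lemma cyl_eq : cylIdeal μ = Ideal.span ((fun s => monomial s (1:ℂ)) ''
    {s : Fin 3 →₀ ℕ | ∃ a b : ℕ, (a,b) ∉ μ ∧ s = Finsupp.single 1 a + Finsupp.single 2 b}) := by
  unfold cylIdeal
  congr 1
  ext m
  constructor
  · rintro ⟨a,b,h,rfl⟩; exact ⟨_, ⟨a,b,h,rfl⟩, rfl⟩
  · rintro ⟨s, ⟨a,b,h,rfl⟩, rfl⟩; exact ⟨a,b,h,rfl⟩

lemma mem_cyl_iff {p : R3} : p ∈ cylIdeal μ ↔
    ∀ m ∈ p.support, ∃ a b : ℕ, (a,b) ∉ μ ∧ Finsupp.single 1 a + Finsupp.single 2 b ≤ m := by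
  rw [cyl_eq, mem_ideal_span_monomial_image]
  constructor
  · intro h m hm; obtain ⟨s, ⟨a,b,hab,rfl⟩, hle⟩ := h m hm; exact ⟨a,b,hab,hle⟩
  · intro h m hm; obtain ⟨a,b,hab,hle⟩ := h m hm; exact ⟨_, ⟨a,b,hab,rfl⟩, hle⟩

lemma X0_mul_mem {p : R3} (h : X 0 * p ∈ cylIdeal μ) : p ∈ cylIdeal μ := by
  rw [mem_cyl_iff] at h ⊢
  intro m hm
  have hm' : Finsupp.single (0 : Fin 3) 1 + m ∈ (X (0:Fin 3) * p).support := by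
    rw [support_X_mul]
    exact Finset.mem_map.mpr ⟨m, hm, rfl⟩
  obtain ⟨a, b, hab, hle⟩ := h _ hm'
  refine ⟨a, b, hab, Finsupp.le_def.mpr fun i => ?_⟩
  have hi := Finsupp.le_def.mp hle i
  by_cases h0 : i = 0
  · subst h0
    have e0 : (Finsupp.single (1:Fin 3) a + Finsupp.single (2:Fin 3) b) (0:Fin 3) = 0 := by
      simp [Finsupp.single_apply]
    rw [e0]
    exact Nat.zero_le _
  · have e1 : (Finsupp.single (0:Fin 3) (1:ℕ) + m) i = m i := by
      simp only [Finsupp.add_apply, Finsupp.single_apply,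
        if_neg (fun h' : (0:Fin 3) = i => h0 h'.symm), zero_add]
    rw [e1] at hi
    exact hi
end CylAux

namespace CylAux
variable (μ : YoungDiagram)

abbrev x1 : OC μ := Ideal.Quotient.mk (cylIdeal μ) (X 0)
abbrev x2 : OC μ := Ideal.Quotient.mk (cylIdeal μ) (X 1)
abbrev x3 : OC μ := Ideal.Quotient.mk (cylIdeal μ) (X 2)

lemma x1_mul_cancel0 {z : OC μ} (h : x1 μ * z = 0) : z = 0 := by
  obtain ⟨p, rfl⟩ := Ideal.Quotient.mk_surjective z
  rw [← map_mul, Ideal.Quotient.eq_zero_iff_mem] at h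
  rw [Ideal.Quotient.eq_zero_iff_mem]
  exact X0_mul_mem μ h

lemma x1_pow_mul_cancel0 (n : ℕ) : ∀ {z : OC μ}, x1 μ ^ n * z = 0 → z = 0 := by
  induction n with
  | zero => intro z h; simpa using h
  | succ k ih =>
    intro z h
    rw [pow_succ, mul_assoc] at h
    exact x1_mul_cancel0 μ (ih h)

lemma x1_pow_mul_cancel (n : ℕ) {z w : OC μ} (h : x1 μ ^ n * z = x1 μ ^ n * w) : z = w := by
  have : x1 μ ^ n * (z - w) = 0 := by rw [mul_sub, h, sub_self]
  have := x1_pow_mul_cancel0 μ n this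
  linear_combination this

lemma fst_lt_card {a b : ℕ} (h : (a, b) ∈ μ) : a < μ.card := by
  have hsub : (Finset.range (a+1)).image (fun i => (i, 0)) ⊆ μ.cells := by
    intro c hc
    simp only [Finset.mem_image, Finset.mem_range] at hc
    obtain ⟨i, hi, rfl⟩ := hc
    exact (YoungDiagram.mem_cells _).mpr (μ.up_left_mem (Nat.lt_succ_iff.mp hi) (Nat.zero_le _) h)
  have hc := Finset.card_le_card hsub
  rw [Finset.card_image_of_injective _ (fun x y hxy => by simpa using congrArg Prod.fst hxy),
    Finset.card_range] at hc
  exact hc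

lemma snd_lt_card {a b : ℕ} (h : (a, b) ∈ μ) : b < μ.card := by
  have hsub : (Finset.range (b+1)).image (fun j => (0, j)) ⊆ μ.cells := by
    intro c hc
    simp only [Finset.mem_image, Finset.mem_range] at hc
    obtain ⟨j, hj, rfl⟩ := hc
    exact (YoungDiagram.mem_cells _).mpr (μ.up_left_mem (Nat.zero_le _) (Nat.lt_succ_iff.mp hj) h)
  have hc := Finset.card_le_card hsub
  rw [Finset.card_image_of_injective _ (fun x y hxy => by simpa using congrArg Prod.snd hxy),
    Finset.card_range] at hc
  exact hc

lemma x2_pow_card : x2 μ ^ μ.card = 0 := by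
  rw [← map_pow, Ideal.Quotient.eq_zero_iff_mem, X_pow_eq_monomial]
  apply Ideal.subset_span
  refine ⟨μ.card, 0, fun h => absurd (fst_lt_card μ h) (lt_irrefl _), ?_⟩
  rw [Finsupp.single_zero, add_zero]

lemma x3_pow_card : x3 μ ^ μ.card = 0 := by
  rw [← map_pow, Ideal.Quotient.eq_zero_iff_mem, X_pow_eq_monomial]
  apply Ideal.subset_span
  refine ⟨0, μ.card, fun h => absurd (snd_lt_card μ h) (lt_irrefl _), ?_⟩
  rw [Finsupp.single_zero, zero_add]

lemma mOrigin_eq : mOrigin μ =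
    Ideal.span {x1 μ} ⊔ (Ideal.span {x2 μ} ⊔ Ideal.span {x3 μ}) := by
  rw [mOrigin, ← Ideal.span_union, ← Ideal.span_union]
  congr 1
  ext z
  constructor
  · rintro ⟨i, rfl⟩
    fin_cases i
    · exact Or.inl rfl
    · exact Or.inr (Or.inl rfl)
    · exact Or.inr (Or.inr rfl)
  · rintro (rfl | rfl | rfl)
    exacts [⟨0, rfl⟩, ⟨1, rfl⟩, ⟨2, rfl⟩]

lemma pow_le_span (n : ℕ) : mOrigin μ ^ (n + (μ.card + μ.card)) ≤ Ideal.span {x1 μ ^ n} := by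
  have h2 : Ideal.span {x2 μ} ^ μ.card = ⊥ := by
    rw [Ideal.span_singleton_pow, x2_pow_card μ]; exact Ideal.span_singleton_eq_bot.mpr rfl
  have h3 : Ideal.span {x3 μ} ^ μ.card = ⊥ := by
    rw [Ideal.span_singleton_pow, x3_pow_card μ]; exact Ideal.span_singleton_eq_bot.mpr rfl
  calc mOrigin μ ^ (n + (μ.card + μ.card))
      = (Ideal.span {x1 μ} ⊔ (Ideal.span {x2 μ} ⊔ Ideal.span {x3 μ})) ^ (n + (μ.card + μ.card)) := by
        rw [mOrigin_eq]
    _ ≤ Ideal.span {x1 μ} ^ n ⊔ (Ideal.span {x2 μ} ⊔ Ideal.span {x3 μ}) ^ (μ.card + μ.card) :=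
        Ideal.sup_pow_add_le_pow_sup_pow
    _ ≤ Ideal.span {x1 μ} ^ n ⊔ (Ideal.span {x2 μ} ^ μ.card ⊔ Ideal.span {x3 μ} ^ μ.card) :=
        sup_le_sup_left Ideal.sup_pow_add_le_pow_sup_pow _
    _ = Ideal.span {x1 μ ^ n} := by
        rw [h2, h3, Ideal.span_singleton_pow, sup_bot_eq, sup_bot_eq]

lemma x1_mem : x1 μ ∈ mOrigin μ := Ideal.subset_span ⟨0, rfl⟩

lemma x1_pow_mem (r : ℕ) : x1 μ ^ r ∈ mOrigin μ ^ r := Ideal.pow_mem_pow (x1_mem μ) r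

end CylAux

namespace CylAux
variable (μ : YoungDiagram)

/-- Evaluation of a hom at `x1^r`, divided by `x1^r` in the localization. -/
def gmap (r : ℕ) : homSystem μ r →ₗ[OC μ] Localization.Away (x1 μ) where
  toFun φ := Localization.mk (φ ⟨x1 μ ^ r, x1_pow_mem μ r⟩) ⟨x1 μ ^ r, ⟨r, rfl⟩⟩
  map_add' φ ψ := by
    show Localization.mk ((φ + ψ) _) _ = Localization.mk (φ _) _ + Localization.mk (ψ _) _
    rw [LinearMap.add_apply, ← Localization.add_mk_self]
  map_smul' c φ := by
    show Localization.mk ((c • φ) _) _ = c • Localization.mk (φ _) _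
    rw [LinearMap.smul_apply, Localization.smul_mk]

lemma g_compat (r s : ℕ) (h : r ≤ s) (φ : homSystem μ r) :
    gmap μ s (homTransition μ r s h φ) = gmap μ r φ := by
  have key : (homTransition μ r s h φ) ⟨x1 μ ^ s, x1_pow_mem μ s⟩
      = x1 μ ^ (s - r) * (φ ⟨x1 μ ^ r, x1_pow_mem μ r⟩) := by
    have e : (Submodule.inclusion (Ideal.pow_le_pow_right h) ⟨x1 μ ^ s, x1_pow_mem μ s⟩ :
        ↥(mOrigin μ ^ r)) = (x1 μ ^ (s - r)) • ⟨x1 μ ^ r, x1_pow_mem μ r⟩ := by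
      apply Subtype.ext
      show x1 μ ^ s = x1 μ ^ (s - r) * x1 μ ^ r
      rw [← pow_add, Nat.sub_add_cancel h]
    show φ (Submodule.inclusion (Ideal.pow_le_pow_right h) ⟨x1 μ ^ s, x1_pow_mem μ s⟩) = _
    rw [e, map_smul, smul_eq_mul]
  show Localization.mk _ _ = Localization.mk _ _
  rw [key]
  rw [Localization.mk_eq_mk_iff, Localization.r_iff_exists]
  refine ⟨1, ?_⟩
  show (1 : OC μ) * (x1 μ ^ r * (x1 μ ^ (s - r) * _)) = (1 : OC μ) * (x1 μ ^ s * _)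
  rw [one_mul, one_mul, ← mul_assoc, ← pow_add]
  rw [show r + (s - r) = s from by omega]

lemma gmap_zero_of_eq_zero (r : ℕ) (φ : homSystem μ r) (h0 : gmap μ r φ = 0) : φ = 0 := by
  have hmk : (Localization.mk (φ ⟨x1 μ ^ r, x1_pow_mem μ r⟩)
      (⟨x1 μ ^ r, ⟨r, rfl⟩⟩ : Submonoid.powers (x1 μ)) : Localization.Away (x1 μ)) = 0 := h0
  rw [Localization.mk_eq_mk'] at hmk
  rw [IsLocalization.mk'_eq_zero_iff] at hmk
  obtain ⟨m, hu⟩ := hmk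
  obtain ⟨k, hk⟩ := m.2
  have hk' : x1 μ ^ k = (m : OC μ) := hk
  have ht : φ ⟨x1 μ ^ r, x1_pow_mem μ r⟩ = 0 := by
    apply x1_pow_mul_cancel0 μ k
    rw [hk']
    exact hu
  ext z
  have h1 : (x1 μ ^ r) • z = (z : OC μ) • (⟨x1 μ ^ r, x1_pow_mem μ r⟩ : ↥(mOrigin μ ^ r)) := by
    apply Subtype.ext
    show x1 μ ^ r * (z : OC μ) = (z : OC μ) * x1 μ ^ r
    ring
  have h2 : x1 μ ^ r * φ z = 0 := by
    calc x1 μ ^ r * φ z = φ ((x1 μ ^ r) • z) := by rw [map_smul, smul_eq_mul]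
    _ = (z : OC μ) * φ ⟨x1 μ ^ r, x1_pow_mem μ r⟩ := by rw [h1, map_smul, smul_eq_mul]
    _ = 0 := by rw [ht, mul_zero]
  simpa using x1_pow_mul_cancel0 μ r h2

end CylAux

namespace CylAux
variable (μ : YoungDiagram)

lemma exists_hom (a : OC μ) (n : ℕ) :
    ∃ φ : homSystem μ (n + (μ.card + μ.card)),
      x1 μ ^ n * φ ⟨x1 μ ^ (n + (μ.card + μ.card)), x1_pow_mem μ _⟩
        = a * x1 μ ^ (n + (μ.card + μ.card)) := by
  set r := n + (μ.card + μ.card) with hr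
  have hle : mOrigin μ ^ r ≤ Ideal.span {x1 μ ^ n} := pow_le_span μ n
  set L : OC μ →ₗ[OC μ] OC μ := LinearMap.mulLeft (OC μ) (x1 μ ^ n) with hL
  have hLinj : Function.Injective L := by
    intro z w h
    exact x1_pow_mul_cancel μ n h
  have hmem : ∀ z : ↥(mOrigin μ ^ r), a * (z : OC μ) ∈ LinearMap.range L := by
    intro z
    obtain ⟨w, hw⟩ := Ideal.mem_span_singleton'.mp (hle z.2)
    exact ⟨a * w, by show x1 μ ^ n * (a * w) = a * (z : OC μ); rw [← hw]; ring⟩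
  set ψ : ↥(mOrigin μ ^ r) →ₗ[OC μ] ↥(LinearMap.range L) :=
    LinearMap.codRestrict _ ((LinearMap.mulLeft (OC μ) a).comp (Submodule.subtype _)) hmem with hψ
  set e := LinearEquiv.ofInjective L hLinj with he
  refine ⟨e.symm.toLinearMap.comp ψ, ?_⟩
  have h1 : x1 μ ^ n * (e.symm.toLinearMap.comp ψ) ⟨x1 μ ^ r, x1_pow_mem μ _⟩
      = (e ((e.symm.toLinearMap.comp ψ) ⟨x1 μ ^ r, x1_pow_mem μ _⟩) : OC μ) := by
    rw [he, LinearEquiv.ofInjective_apply]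
    rfl
  rw [h1]
  show ((e (e.symm (ψ ⟨x1 μ ^ r, x1_pow_mem μ _⟩))) : OC μ) = _
  rw [LinearEquiv.apply_symm_apply]
  show a * x1 μ ^ r = a * x1 μ ^ r
  rfl

end CylAux

noncomputable def Fmap (μ : YoungDiagram) :
    Module.DirectLimit (homSystem μ) (homTransition μ) →ₗ[OC μ]
    Localization.Away (CylAux.x1 μ) :=
  @Module.DirectLimit.lift (OC μ) _ ℕ _ (homSystem μ) _ _ (homTransition μ) _
    (Localization.Away (CylAux.x1 μ)) inferInstance inferInstance (CylAux.gmap μ)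
    (CylAux.g_compat μ)

lemma Fmap_of (μ : YoungDiagram) (r : ℕ) (φ : homSystem μ r) :
    Fmap μ (Module.DirectLimit.of (OC μ) ℕ (homSystem μ) (homTransition μ) r φ)
      = CylAux.gmap μ r φ :=
  Module.DirectLimit.lift_of _ _ _


theorem directLimit_hom_iso_localization (μ : YoungDiagram) (hμ : μ ≠ ⊥) :
    Nonempty
      (Module.DirectLimit (homSystem μ) (homTransition μ) ≃ₗ[OC μ]
        Localization.Away (Ideal.Quotient.mk (cylIdeal μ) (X 0))) := by
  have hinj : Function.Injective (Fmap μ) := by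
    letI : AddCommGroup (Module.DirectLimit (homSystem μ) (homTransition μ)) :=
      Module.DirectLimit.addCommGroup (homSystem μ) (homTransition μ)
    rw [injective_iff_map_eq_zero]
    intro z hz
    obtain ⟨r, φ, rfl⟩ := Module.DirectLimit.exists_of z
    rw [Fmap_of] at hz
    rw [CylAux.gmap_zero_of_eq_zero μ r φ hz]
    exact map_zero _
  have hsurj : Function.Surjective (Fmap μ) := by
    intro y
    refine Localization.induction_on y ?_
    rintro ⟨a, s⟩
    obtain ⟨n, hn⟩ := s.2
    obtain ⟨φ, hφ⟩ := CylAux.exists_hom μ a n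
    refine ⟨Module.DirectLimit.of (OC μ) ℕ (homSystem μ) (homTransition μ)
      (n + (μ.card + μ.card)) φ, ?_⟩
    rw [Fmap_of]
    have hn' : CylAux.x1 μ ^ n = (s : OC μ) := hn
    have hs : s = ⟨CylAux.x1 μ ^ n, ⟨n, rfl⟩⟩ := Subtype.ext hn'.symm
    show Localization.mk _ _ = Localization.mk a s
    rw [hs, Localization.mk_eq_mk_iff, Localization.r_iff_exists]
    refine ⟨1, ?_⟩
    show (1 : OC μ) * (CylAux.x1 μ ^ n * _) = (1 : OC μ)
      * (CylAux.x1 μ ^ (n + (μ.card + μ.card)) * a)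
    rw [one_mul, one_mul, hφ]
    ring
  exact ⟨LinearEquiv.ofBijective (Fmap μ) ⟨hinj, hsurj⟩⟩

end
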